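/- arXiv:quant-ph/0002081 — 2 statements merged into one kernel-verified Lean document; each statement's English description precedes it below -/
import Mathlib

section
/- Every asymptotically Euclidean transformation f of G = ℝ × ℝ³ can be factorized uniquely as f = f₁ ∘ f₂ ∘ f₃, where f₃ is a rotation (f₃(t,x) = (t, R x) for an orthogonal matrix R), f₂ is an asymptotically identical transformation, and f₁ is a boost (f₁(t,x) = (t, x − v₀ t) for some v₀ ∈ ℝ³). -/
open Filter Topology Set

noncomputable section

/-- Euclidean 3-space. -/
abbrev E3 : Type := EuclideanSpace ℝ (Fin 3)

/-- The Galilean space-time `G = ℝ × ℝ³`. -/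
abbrev Gal : Type := ℝ × E3

/-- A transformation (homeomorphism) of `G` is causal if it preserves the time
ordering of events: `P_T(u) < P_T(w)` implies `P_T(f(u)) < P_T(f(w))`. -/
def Causal (f : Gal ≃ₜ Gal) : Prop :=
  ∀ u w : Gal, u.1 < w.1 → (f u).1 < (f w).1

/-- The semitrajectory in `G` which is the graph of the curve `γ` on `[t₀, ∞)`. -/
def semitraj (t₀ : ℝ) (γ : ℝ → E3) : Set Gal :=
  (fun t => (t, γ t)) '' Set.Ici t₀

/-- `S ⊆ G` is a semitrajectory: the graph of a continuous curve `γ : [t₀, ∞) → ℝ³`. -/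
def IsSemitraj (S : Set Gal) : Prop :=
  ∃ (t₀ : ℝ) (γ : ℝ → E3), ContinuousOn γ (Set.Ici t₀) ∧ S = semitraj t₀ γ

/-- `S` is an asymptotically regular semitrajectory with asymptotic velocity `v`,
i.e. `S` is the graph of a continuous curve `γ : [t₀, ∞) → ℝ³` with `γ(t)/t → v`. -/
def HasAsympVel (S : Set Gal) (v : E3) : Prop :=
  ∃ (t₀ : ℝ) (γ : ℝ → E3), ContinuousOn γ (Set.Ici t₀) ∧ S = semitraj t₀ γ ∧
    Tendsto (fun t : ℝ => t⁻¹ • γ t) atTop (𝓝 v)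

/-- `F` is the asymptotic transform of `f`: for every `v`, every asymptotically regular
semitrajectory `S` with `ω(S) = v` has `ω(f(S)) = F v`.  (In particular the existence of
such an `F` says exactly that `f` is asymptotically regular at every point.) -/
def IsAsympTransform (f : Gal ≃ₜ Gal) (F : E3 → E3) : Prop :=
  ∀ (v : E3) (S : Set Gal), HasAsympVel S v → HasAsympVel (f '' S) (F v)

/-- `f` is asymptotically regular: at every `v ∈ V` there is a `v′` such that every
asymptotically regular semitrajectory with asymptotic velocity `v` is mapped to one with
asymptotic velocity `v′`. -/
def AsympReg (f : Gal ≃ₜ Gal) : Prop :=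
  ∃ F : E3 → E3, IsAsympTransform f F

/-- `f` is an asymptotic homeomorphism: both `f` and `f⁻¹` are asymptotically regular. -/
def AsympHomeo (f : Gal ≃ₜ Gal) : Prop := AsympReg f ∧ AsympReg f.symm

/-- `f` is an asymptotically identical transformation: a causal asymptotic
homeomorphism with `f⁺ = id`. -/
def AsympIdentical (f : Gal ≃ₜ Gal) : Prop :=
  Causal f ∧ AsympHomeo f ∧ IsAsympTransform f (id : E3 → E3)

/-- `f` is an asymptotically Euclidean transformation: a causal asymptotic
homeomorphism with `f⁺(v) = R v − v₀` for some orthogonal `R` and `v₀ ∈ ℝ³`. -/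
def AsympEuclidean (f : Gal ≃ₜ Gal) : Prop :=
  Causal f ∧ AsympHomeo f ∧
    ∃ (R : E3 ≃ₗᵢ[ℝ] E3) (v₀ : E3), IsAsympTransform f (fun v => R v - v₀)

/-- The rotation `(t, x) ↦ (t, R x)` as a homeomorphism of `G`. -/
def rotHomeo (R : E3 ≃ₗᵢ[ℝ] E3) : Gal ≃ₜ Gal :=
  (Homeomorph.refl ℝ).prodCongr R.toHomeomorph

/-- The boost `(t, x) ↦ (t, x − v₀ t)` as a homeomorphism of `G`. -/
def boostHomeo (v₀ : E3) : Gal ≃ₜ Gal where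
  toFun p := (p.1, p.2 - p.1 • v₀)
  invFun p := (p.1, p.2 + p.1 • v₀)
  left_inv p := by simp
  right_inv p := by simp
  continuous_toFun := by fun_prop
  continuous_invFun := by fun_prop

/-!
The asymptotic transform is determined by the transformation (test it on the straight lines
`t ↦ t • v`) and is functorial under composition. Rotations and boosts have transforms
`v ↦ R v` and `v ↦ v - v₀`, so when `f⁺ v = R v - v₀` the middle factor
`f₂ = boost⁻¹ ∘ f ∘ rotation⁻¹` has transform `id`. Conversely every such factorization has
`f⁺ v = R' v - v₀'`, which pins down `R' = R` and `v₀' = v₀`, and then `f₂`.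
-/

lemma image_semitraj (f : Gal ≃ₜ Gal) (t₀ : ℝ) (γ : ℝ → E3) :
    f '' semitraj t₀ γ = (fun t => f (t, γ t)) '' Ici t₀ := by
  rw [semitraj, image_image]

lemma HasAsympVel.unique {S : Set Gal} {v w : E3} (hv : HasAsympVel S v)
    (hw : HasAsympVel S w) : v = w := by
  obtain ⟨t₀, γ, -, rfl, hγ⟩ := hv
  obtain ⟨t₁, γ', -, hS, hγ'⟩ := hw
  have hγγ' : (fun t : ℝ => t⁻¹ • γ t) =ᶠ[atTop] fun t => t⁻¹ • γ' t := by
    filter_upwards [eventually_ge_atTop (max t₀ t₁)] with t ht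
    obtain ⟨s, -, hs⟩ : (t, γ t) ∈ semitraj t₁ γ' := hS ▸ ⟨t, le_of_max_le_left ht, rfl⟩
    obtain ⟨rfl, hγt⟩ := Prod.mk.inj hs
    rw [hγt]
  exact tendsto_nhds_unique (hγ.congr' hγγ') hγ'

lemma hasAsympVel_line (v : E3) : HasAsympVel (semitraj 0 fun t => t • v) v := by
  refine ⟨0, fun t => t • v, by fun_prop, rfl, tendsto_const_nhds.congr' ?_⟩
  filter_upwards [eventually_ne_atTop 0] with t ht
  rw [smul_smul, inv_mul_cancel₀ ht, one_smul]

namespace IsAsympTransform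

lemma unique {f : Gal ≃ₜ Gal} {F F' : E3 → E3} (hF : IsAsympTransform f F)
    (hF' : IsAsympTransform f F') : F = F' :=
  funext fun v => (hF v _ (hasAsympVel_line v)).unique (hF' v _ (hasAsympVel_line v))

lemma trans {f g : Gal ≃ₜ Gal} {F G : E3 → E3} (hf : IsAsympTransform f F)
    (hg : IsAsympTransform g G) : IsAsympTransform (f.trans g) (G ∘ F) := by
  intro v S hS
  change HasAsympVel ((g ∘ f) '' S) _
  rw [image_comp]
  exact hg (F v) (f '' S) (hf v S hS)

end IsAsympTransform

lemma isAsympTransform_rotHomeo (R : E3 ≃ₗᵢ[ℝ] E3) : IsAsympTransform (rotHomeo R) R := by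
  rintro v S ⟨t₀, γ, hγ, rfl, hlim⟩
  refine ⟨t₀, fun t => R (γ t), R.continuous.comp_continuousOn hγ, image_semitraj _ _ _, ?_⟩
  simpa only [Function.comp_def, map_smul] using (R.continuous.tendsto v).comp hlim

lemma isAsympTransform_boostHomeo (v₀ : E3) :
    IsAsympTransform (boostHomeo v₀) fun v => v - v₀ := by
  rintro v S ⟨t₀, γ, hγ, rfl, hlim⟩
  refine ⟨t₀, fun t => γ t - t • v₀, hγ.sub (by fun_prop), image_semitraj _ _ _,
    (hlim.sub_const v₀).congr' ?_⟩
  filter_upwards [eventually_ne_atTop 0] with t ht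
  rw [smul_sub, smul_smul, inv_mul_cancel₀ ht, one_smul]

lemma rotHomeo_symm (R : E3 ≃ₗᵢ[ℝ] E3) : (rotHomeo R).symm = rotHomeo R.symm := rfl

lemma boostHomeo_symm (v₀ : E3) : (boostHomeo v₀).symm = boostHomeo (-v₀) :=
  Homeomorph.ext fun p => Prod.ext rfl (by simp [boostHomeo])

lemma Causal.trans {f g : Gal ≃ₜ Gal} (hf : Causal f) (hg : Causal g) : Causal (f.trans g) :=
  fun u w h => hg _ _ (hf u w h)

lemma causal_rotHomeo (R : E3 ≃ₗᵢ[ℝ] E3) : Causal (rotHomeo R) := fun _ _ h => h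

lemma causal_boostHomeo (v₀ : E3) : Causal (boostHomeo v₀) := fun _ _ h => h

lemma LinearIsometryEquiv.eq_of_sub_eq_sub {E : Type*} [SeminormedAddCommGroup E]
    [Module ℝ E] {R R' : E ≃ₗᵢ[ℝ] E} {v₀ v₀' : E}
    (h : (fun v => R v - v₀) = fun v => R' v - v₀') : R = R' ∧ v₀ = v₀' := by
  have hv₀ : v₀ = v₀' := by simpa using congrFun h 0
  subst hv₀
  exact ⟨LinearIsometryEquiv.ext fun v => sub_left_inj.mp (congrFun h v), rfl⟩

lemma eq_rotHomeo_trans_boostHomeo_iff (f g : Gal ≃ₜ Gal) (R : E3 ≃ₗᵢ[ℝ] E3) (v₀ : E3) :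
    f = ((rotHomeo R).trans g).trans (boostHomeo v₀) ↔
      g = ((rotHomeo R).symm.trans f).trans (boostHomeo v₀).symm := by
  constructor <;> rintro rfl <;> ext1 p <;> simp

lemma isAsympTransform_rotHomeo_trans_boostHomeo {g : Gal ≃ₜ Gal}
    (hg : IsAsympTransform g id) (R : E3 ≃ₗᵢ[ℝ] E3) (v₀ : E3) :
    IsAsympTransform (((rotHomeo R).trans g).trans (boostHomeo v₀)) fun v => R v - v₀ :=
  ((isAsympTransform_rotHomeo R).trans hg).trans (isAsympTransform_boostHomeo v₀)

lemma asympIdentical_symm_rotHomeo_trans_symm_boostHomeo {f : Gal ≃ₜ Gal} (hC : Causal f)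
    (hreg : AsympReg f.symm) {R : E3 ≃ₗᵢ[ℝ] E3} {v₀ : E3}
    (hF : IsAsympTransform f fun v => R v - v₀) :
    AsympIdentical (((rotHomeo R).symm.trans f).trans (boostHomeo v₀).symm) := by
  obtain ⟨F', hF'⟩ := hreg
  have hreg_symm : AsympReg (((rotHomeo R).symm.trans f).trans (boostHomeo v₀).symm).symm :=
    ⟨_, ((isAsympTransform_boostHomeo v₀).trans hF').trans (isAsympTransform_rotHomeo R)⟩
  rw [rotHomeo_symm, boostHomeo_symm] at hreg_symm ⊢
  have hid : IsAsympTransform (((rotHomeo R.symm).trans f).trans (boostHomeo (-v₀))) id := by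
    convert ((isAsympTransform_rotHomeo R.symm).trans hF).trans
      (isAsympTransform_boostHomeo (-v₀))
    ext1 v
    simp
  exact ⟨((causal_rotHomeo _).trans hC).trans (causal_boostHomeo _), ⟨⟨id, hid⟩, hreg_symm⟩, hid⟩

/-- Every asymptotically Euclidean transformation `f` of `G = ℝ × ℝ³`
can be factorized uniquely as `f = f₁ ∘ f₂ ∘ f₃` where `f₃` is a rotation
(`f₃(t,x) = (t, R x)` for an orthogonal `R`), `f₂` is an asymptotically identical
transformation, and `f₁` is a boost (`f₁(t,x) = (t, x − v₀ t)`). -/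
theorem stmt15 (f : Gal ≃ₜ Gal) (hf : AsympEuclidean f) :
    ∃! triple : (E3 ≃ₗᵢ[ℝ] E3) × E3 × (Gal ≃ₜ Gal),
      AsympIdentical triple.2.2 ∧
        f = ((rotHomeo triple.1).trans triple.2.2).trans (boostHomeo triple.2.1) := by
  obtain ⟨hC, ⟨-, hreg⟩, R, v₀, hF⟩ := hf
  refine ⟨(R, v₀, ((rotHomeo R).symm.trans f).trans (boostHomeo v₀).symm),
    ⟨asympIdentical_symm_rotHomeo_trans_symm_boostHomeo hC hreg hF,
      (eq_rotHomeo_trans_boostHomeo_iff _ _ _ _).mpr rfl⟩, ?_⟩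
  rintro ⟨R', v₀', g⟩ ⟨⟨-, -, hg⟩, hfg⟩
  obtain ⟨rfl, rfl⟩ := LinearIsometryEquiv.eq_of_sub_eq_sub
    (hF.unique (hfg ▸ isAsympTransform_rotHomeo_trans_boostHomeo hg R' v₀'))
  rw [eq_rotHomeo_trans_boostHomeo_iff] at hfg
  exact Prod.ext rfl (Prod.ext rfl hfg)
end
end

section
/- Let Δ ⊆ ℝ³ be a bounded set and let f be an asymptotically identical transformation of G = ℝ × ℝ³. For v ∈ ℝ³ let vᶜ denote the semitrajectory {(s, v s) : s ≥ 0}, and let f(vᶜ)(t) denote the spatial point at time t of the image semitrajectory f(vᶜ) (so that, writing f(t,x) = (f_T(t), f_X(t,x)), one has f(vᶜ)(f_T(s)) = f_X(s, v s)). Then sup_{v ∈ Δ} ‖f(vᶜ)(t) − v t‖ / t → 0 as t → +∞. -/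
open Filter Topology Set

noncomputable section

/-!
Argue along sequences. If the deviation stayed above `ε t` at times `tₙ → ∞` for velocities
`vₙ ∈ Δ`, boundedness of `Δ` lets us pass to a subsequence with `vₙ → v` and strictly increasing
`sₙ = f_T⁻¹(tₙ)`. Interpolating the `vₙ` piecewise linearly between the nodes `sₙ` gives a
continuous `w` with `w(sₙ) = vₙ` and `w → v`, so the curve `s ↦ s w(s)` is a semitrajectory with
asymptotic velocity `v` through the events `(sₙ, sₙ vₙ)`. Since `f⁺ = id`, its image has
asymptotic velocity `v` and passes through `(tₙ, f_X(sₙ, sₙ vₙ))`, whence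
`f_X(sₙ, sₙ vₙ)/tₙ - vₙ → 0`, a contradiction.
-/

section Interpolation

variable {E : Type*} [NormedAddCommGroup E] [NormedSpace ℝ E]

def piecewiseLinear (c : ℤ → E) (y : ℝ) : E :=
  AffineMap.lineMap (c ⌊y⌋) (c (⌊y⌋ + 1)) (Int.fract y)

@[simp]
lemma piecewiseLinear_intCast (c : ℤ → E) (n : ℤ) : piecewiseLinear c n = c n := by
  simp [piecewiseLinear]

lemma piecewiseLinear_eq_lineMap (c : ℤ → E) {n : ℤ} {y : ℝ} (hy : y ∈ Icc (n : ℝ) (n + 1)) :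
    piecewiseLinear c y = AffineMap.lineMap (c n) (c (n + 1)) (y - n) := by
  rcases hy.2.lt_or_eq with hlt | rfl
  · rw [piecewiseLinear, Int.floor_eq_iff.2 ⟨hy.1, hlt⟩, Int.fract, Int.floor_eq_iff.2 ⟨hy.1, hlt⟩]
  · rw [show (n : ℝ) + 1 = ((n + 1 : ℤ) : ℝ) by push_cast; rfl, piecewiseLinear_intCast]
    simp

lemma continuousOn_piecewiseLinear_Icc (c : ℤ → E) (n : ℤ) :
    ContinuousOn (piecewiseLinear c) (Icc (n : ℝ) (n + 1)) :=
  (AffineMap.lineMap_continuous.comp (continuous_sub_right (n : ℝ))).continuousOn.congr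
    fun _ hy => piecewiseLinear_eq_lineMap c hy

lemma continuous_piecewiseLinear (c : ℤ → E) : Continuous (piecewiseLinear c) := by
  refine continuous_iff_continuousAt.2 fun y => continuousAt_iff_continuous_left_right.2 ⟨?_, ?_⟩
  · have hy : y ∈ Ioc ((⌈y⌉ - 1 : ℤ) : ℝ) ((⌈y⌉ - 1 : ℤ) + 1) := by
      push_cast
      exact ⟨by linarith [Int.ceil_lt_add_one y], by simpa using Int.le_ceil y⟩
    exact ((continuousOn_piecewiseLinear_Icc c _).continuousWithinAt (Ioc_subset_Icc_self hy))
      |>.mono_of_mem_nhdsWithin (Icc_mem_nhdsLE_of_mem hy)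
  · have hy : y ∈ Ico (⌊y⌋ : ℝ) (⌊y⌋ + 1) := ⟨Int.floor_le y, Int.lt_floor_add_one y⟩
    exact ((continuousOn_piecewiseLinear_Icc c _).continuousWithinAt (Ico_subset_Icc_self hy))
      |>.mono_of_mem_nhdsWithin (Icc_mem_nhdsGE_of_mem hy)

lemma tendsto_piecewiseLinear_atTop {c : ℤ → E} {v : E} (hc : Tendsto c atTop (𝓝 v)) :
    Tendsto (piecewiseLinear c) atTop (𝓝 v) := by
  refine Metric.nhds_basis_ball.tendsto_right_iff.2 fun ε hε => ?_
  obtain ⟨N, hN⟩ := eventually_atTop.1 (hc.eventually (Metric.ball_mem_nhds v hε))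
  filter_upwards [eventually_ge_atTop (N : ℝ)] with y hy
  have hNy : N ≤ ⌊y⌋ := Int.le_floor.2 hy
  exact (convex_ball v ε).lineMap_mem (hN _ hNy) (hN _ (by omega))
    ⟨Int.fract_nonneg y, (Int.fract_lt_one y).le⟩

lemma piecewiseLinear_mem_Ico {c : ℤ → ℝ} (hc : StrictMono c) (y : ℝ) :
    piecewiseLinear c y ∈ Ico (c ⌊y⌋) (c (⌊y⌋ + 1)) := by
  have hlt : c ⌊y⌋ < c (⌊y⌋ + 1) := hc (lt_add_one _)
  exact ⟨(left_le_lineMap_iff_nonneg hlt).2 (Int.fract_nonneg y),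
    (lineMap_lt_right_iff_lt_one hlt).2 (Int.fract_lt_one y)⟩

lemma strictMono_piecewiseLinear {c : ℤ → ℝ} (hc : StrictMono c) :
    StrictMono (piecewiseLinear c) := by
  intro a b hab
  rcases (Int.floor_le_floor hab.le).lt_or_eq with hlt | heq
  · calc piecewiseLinear c a < c (⌊a⌋ + 1) := (piecewiseLinear_mem_Ico hc a).2
      _ ≤ c ⌊b⌋ := hc.monotone hlt
      _ ≤ piecewiseLinear c b := (piecewiseLinear_mem_Ico hc b).1
  · have hfract : Int.fract a < Int.fract b := by
      rw [← Int.self_sub_floor, ← Int.self_sub_floor, heq]; linarith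
    rw [piecewiseLinear, piecewiseLinear, heq]
    exact (lineMap_lt_lineMap_iff_of_lt' (hc (lt_add_one _))).2 hfract

lemma surjective_piecewiseLinear {c : ℤ → ℝ} (hc : StrictMono c) (htop : Tendsto c atTop atTop)
    (hbot : Tendsto c atBot atBot) : Function.Surjective (piecewiseLinear c) :=
  (continuous_piecewiseLinear c).surjective
    (tendsto_atTop_mono (fun y => (piecewiseLinear_mem_Ico hc y).1) (htop.comp tendsto_floor_atTop))
    (tendsto_atBot_mono (fun y => (piecewiseLinear_mem_Ico hc y).2.le)
      (hbot.comp (tendsto_atBot_add_const_right _ 1 tendsto_floor_atBot)))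

theorem exists_continuous_interpolation_int {s : ℤ → ℝ} (hs : StrictMono s)
    (htop : Tendsto s atTop atTop) (hbot : Tendsto s atBot atBot) {c : ℤ → E} {v : E}
    (hc : Tendsto c atTop (𝓝 v)) :
    ∃ w : ℝ → E, Continuous w ∧ (∀ n, w (s n) = c n) ∧ Tendsto w atTop (𝓝 v) := by
  -- `e` is the piecewise-linear homeomorphism of `ℝ` with `e n = s n`.
  let e : ℝ ≃o ℝ := (strictMono_piecewiseLinear hs).orderIsoOfSurjective _
    (surjective_piecewiseLinear hs htop hbot)
  have he : ∀ n : ℤ, e.symm (s n) = n := fun n =>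
    e.symm_apply_eq.2 (piecewiseLinear_intCast s n).symm
  exact ⟨piecewiseLinear c ∘ e.symm, (continuous_piecewiseLinear c).comp e.symm.continuous,
    fun n => by simp [he], (tendsto_piecewiseLinear_atTop hc).comp e.symm.tendsto_atTop⟩

theorem exists_continuous_interpolation {s : ℕ → ℝ} (hs : StrictMono s)
    (htop : Tendsto s atTop atTop) {c : ℕ → E} {v : E} (hc : Tendsto c atTop (𝓝 v)) :
    ∃ w : ℝ → E, Continuous w ∧ (∀ n, w (s n) = c n) ∧ Tendsto w atTop (𝓝 v) := by
  have htoNat : Tendsto Int.toNat atTop atTop :=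
    tendsto_atTop_atTop.2 fun n => ⟨n, fun z hz => by omega⟩
  set sZ : ℤ → ℝ := fun z => s z.toNat + min z 0
  have hsZ : StrictMono sZ := by
    intro a b hab
    rcases (Int.toNat_le_toNat hab.le).lt_or_eq with hlt | heq
    · have : ((min a 0 : ℤ) : ℝ) ≤ ((min b 0 : ℤ) : ℝ) := Int.cast_le.2 (by omega)
      linarith [hs hlt]
    · have : ((min a 0 : ℤ) : ℝ) < ((min b 0 : ℤ) : ℝ) := Int.cast_lt.2 (by omega)
      simp only [sZ, heq]
      linarith
  have hsZ_top : Tendsto sZ atTop atTop := by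
    refine (htop.comp htoNat).congr' ?_
    filter_upwards [eventually_ge_atTop 0] with z hz
    simp [sZ, hz]
  have hsZ_bot : Tendsto sZ atBot atBot := by
    refine (tendsto_atBot_add_const_left _ (s 0) (tendsto_intCast_atBot_iff.2 tendsto_id)).congr' ?_
    filter_upwards [eventually_le_atBot 0] with z hz
    simp [sZ, Int.toNat_eq_zero.2 hz, hz]
  obtain ⟨w, hw, hws, hwv⟩ :=
    exists_continuous_interpolation_int hsZ hsZ_top hsZ_bot (hc.comp htoNat)
  exact ⟨w, hw, fun n => by simpa [sZ] using hws n, hwv⟩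

end Interpolation

lemma tendsto_iSup_of_tendstoUniformly_zero {α ι : Type*} {l : Filter α} {g : α → ι → ℝ}
    (hg : ∀ᶠ a in l, ∀ i, 0 ≤ g a i) (h : TendstoUniformly g 0 l) :
    Tendsto (fun a => ⨆ i, g a i) l (𝓝 0) := by
  refine Metric.tendsto_nhds.2 fun ε hε => ?_
  filter_upwards [hg, Metric.tendstoUniformly_iff.1 h (ε / 2) (half_pos hε)] with a hnn hlt
  have hle : ⨆ i, g a i ≤ ε / 2 := Real.iSup_le
    (fun i => by simpa [Real.dist_eq, abs_of_nonneg (hnn i)] using (hlt i).le) (half_pos hε).le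
  rw [Real.dist_eq, sub_zero, abs_of_nonneg (Real.iSup_nonneg hnn)]
  linarith

lemma tendstoUniformly_zero_of_forall_exists_subseq {α ι : Type*} {l : Filter α}
    [l.IsCountablyGenerated] {g : α → ι → ℝ}
    (h : ∀ t : ℕ → α, Tendsto t atTop l → ∀ i : ℕ → ι,
      ∃ φ : ℕ → ℕ, StrictMono φ ∧ Tendsto (fun n => g (t (φ n)) (i (φ n))) atTop (𝓝 0)) :
    TendstoUniformly g 0 l := by
  refine Metric.tendstoUniformly_iff.2 fun ε hε => ?_
  by_contra hbad
  obtain ⟨t, ht, hti⟩ := exists_seq_forall_of_frequently (not_eventually.1 hbad)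
  simp only [not_forall, not_lt] at hti
  choose i hi using hti
  obtain ⟨φ, -, hφ⟩ := h t ht i
  obtain ⟨n, hn⟩ := (hφ.eventually (Metric.ball_mem_nhds 0 hε)).exists
  exact (hi (φ n)).not_gt (by simpa [dist_comm] using hn)

lemma norm_inv_smul_sub_eq_div {E : Type*} [NormedAddCommGroup E] [NormedSpace ℝ E] (x u : E)
    {t : ℝ} (ht : 0 < t) : ‖t⁻¹ • x - u‖ = ‖x - t • u‖ / t := by
  rw [eq_div_iff ht.ne', mul_comm]
  calc t * ‖t⁻¹ • x - u‖ = ‖t • (t⁻¹ • x - u)‖ := by rw [norm_smul, Real.norm_of_nonneg ht.le]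
    _ = ‖x - t • u‖ := by rw [smul_sub, smul_inv_smul₀ ht.ne']

lemma Causal.strictMono_time {f : Gal ≃ₜ Gal} (hf : Causal f) {fT : ℝ → ℝ} {fX : ℝ → E3 → E3}
    (hdec : ∀ p : Gal, f p = (fT p.1, fX p.1 p.2)) : StrictMono fT := fun a b hab => by
  simpa [hdec] using hf (a, 0) (b, 0) hab

lemma hasAsympVel_semitraj_smul {w : ℝ → E3} {v : E3} (hw : Continuous w)
    (hwv : Tendsto w atTop (𝓝 v)) (t₀ : ℝ) : HasAsympVel (semitraj t₀ fun t => t • w t) v := by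
  refine ⟨t₀, _, (by fun_prop : Continuous fun t => t • w t).continuousOn, rfl, hwv.congr' ?_⟩
  filter_upwards [eventually_ne_atTop 0] with t ht
  rw [inv_smul_smul₀ ht]

lemma apply_eq_of_image_semitraj_eq {f : Gal ≃ₜ Gal} {fT : ℝ → ℝ} {fX : ℝ → E3 → E3}
    (hdec : ∀ p : Gal, f p = (fT p.1, fX p.1 p.2)) {t₀ t₁ : ℝ} {γ δ : ℝ → E3}
    (h : f '' semitraj t₀ γ = semitraj t₁ δ) {t : ℝ} (ht : t₀ ≤ t) : δ (fT t) = fX t (γ t) := by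
  obtain ⟨t', -, ht'⟩ : f (t, γ t) ∈ semitraj t₁ δ := h ▸ mem_image_of_mem f ⟨t, ht, rfl⟩
  rw [hdec] at ht'
  obtain ⟨rfl, hδ⟩ := Prod.ext_iff.1 ht'
  exact hδ

theorem IsAsympTransform.tendsto_velocity_of_id {f : Gal ≃ₜ Gal} (hid : IsAsympTransform f id)
    {fT : ℝ → ℝ} {fX : ℝ → E3 → E3} (hdec : ∀ p : Gal, f p = (fT p.1, fX p.1 p.2))
    {s : ℕ → ℝ} (hs : StrictMono s) (hs_top : Tendsto s atTop atTop)
    (hfs_top : Tendsto (fun n => fT (s n)) atTop atTop) {u : ℕ → E3} {v : E3}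
    (hu : Tendsto u atTop (𝓝 v)) :
    Tendsto (fun n => (fT (s n))⁻¹ • fX (s n) (s n • u n)) atTop (𝓝 v) := by
  obtain ⟨w, hw, hws, hwv⟩ := exists_continuous_interpolation hs hs_top hu
  obtain ⟨t₁, δ, -, himg, hδ⟩ := hid v _ (hasAsympVel_semitraj_smul hw hwv (s 0))
  refine (hδ.comp hfs_top).congr fun n => ?_
  simp only [Function.comp_apply, apply_eq_of_image_semitraj_eq hdec himg (hs.monotone n.zero_le),
    hws]

theorem IsAsympTransform.exists_subseq_deviation_tendsto_zero {Δ : Set E3}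
    (hΔ : Bornology.IsBounded Δ) {f : Gal ≃ₜ Gal} (hid : IsAsympTransform f id) {fT : ℝ ≃ₜ ℝ}
    {fX : ℝ → E3 → E3} (hdec : ∀ p : Gal, f p = (fT p.1, fX p.1 p.2)) (hfT : StrictMono fT)
    {t : ℕ → ℝ} (ht : Tendsto t atTop atTop) (u : ℕ → Δ) :
    ∃ φ : ℕ → ℕ, StrictMono φ ∧ Tendsto (fun n =>
      ‖fX (fT.symm (t (φ n))) (fT.symm (t (φ n)) • (u (φ n) : E3)) - t (φ n) • (u (φ n) : E3)‖ /
        t (φ n)) atTop (𝓝 0) := by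
  have hsymm : Tendsto fT.symm atTop atTop :=
    tendsto_atTop_atTop_of_monotone (fun a b hab => hfT.le_iff_le.1 (by simpa using hab))
      fun b => ⟨fT b, by simp⟩
  obtain ⟨v, -, φ, hφ, hv⟩ := hΔ.isCompact_closure.tendsto_subseq fun n => subset_closure (u n).2
  obtain ⟨ψ, hψ, hsψ⟩ := strictMono_subseq_of_tendsto_atTop (hsymm.comp (ht.comp hφ.tendsto_atTop))
  have hτ : Tendsto (fun n => t (φ (ψ n))) atTop atTop := ht.comp (hφ.comp hψ).tendsto_atTop
  have huψ := hv.comp hψ.tendsto_atTop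
  have hlim := hid.tendsto_velocity_of_id hdec hsψ (hsymm.comp hτ)
    (hτ.congr fun n => (fT.apply_symm_apply _).symm) huψ
  refine ⟨φ ∘ ψ, hφ.comp hψ, ?_⟩
  have hdev := (hlim.sub huψ).norm
  rw [sub_self, norm_zero] at hdev
  refine hdev.congr' ?_
  filter_upwards [hτ.eventually_gt_atTop 0] with n hn
  simp only [Function.comp_apply, Homeomorph.apply_symm_apply]
  exact norm_inv_smul_sub_eq_div _ _ hn

/-- Let `Δ ⊆ ℝ³` be a bounded set and let `f` be an asymptotically
identical transformation of `G = ℝ × ℝ³`, written `f(t,x) = (f_T(t), f_X(t,x))`.  For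
`v ∈ ℝ³`, `vᶜ` is the semitrajectory `{(s, v s) : s ≥ 0}`, whose image satisfies
`f(vᶜ)(f_T(s)) = f_X(s, v s)`, i.e. the spatial point of `f(vᶜ)` at time `t` is
`f_X(f_T⁻¹(t), f_T⁻¹(t) • v)`.  Then
`sup_{v ∈ Δ} ‖f(vᶜ)(t) − v t‖ / t → 0` as `t → +∞`. -/
theorem stmt18 (Δ : Set E3) (hΔ : Bornology.IsBounded Δ)
    (f : Gal ≃ₜ Gal) (hf : AsympIdentical f)
    (fT : ℝ ≃ₜ ℝ) (fX : ℝ → E3 → E3)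
    (hdec : ∀ p : Gal, f p = (fT p.1, fX p.1 p.2)) :
    Tendsto
      (fun t : ℝ =>
        ⨆ v : Δ, ‖fX (fT.symm t) ((fT.symm t : ℝ) • (v : E3)) - t • (v : E3)‖ / t)
      atTop (𝓝 0) := by
  have hfT : StrictMono fT := hf.1.strictMono_time hdec
  refine tendsto_iSup_of_tendstoUniformly_zero ?_ (tendstoUniformly_zero_of_forall_exists_subseq
    fun t ht u => hf.2.2.exists_subseq_deviation_tendsto_zero hΔ hdec hfT ht u)
  filter_upwards [eventually_ge_atTop 0] with t ht v
  positivity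
end
end
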